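/- arXiv:2012.03033 — 3 statements merged into one kernel-verified Lean document; each statement's English description precedes it below -/
import Mathlib

section
/- Let m_x > m_y and c := m_xy* + m_yx* > 0 with m_yx* > 0. Then the quadratic equation (m_x − m_y)β² − (m_x − m_y + c)β + m_yx* = 0 in β has exactly one root in (0,1), given by β_a^L = 1/2 + (c − √((m_x − m_y)² + c²)) / (2(m_x − m_y)), and this root satisfies 0 < β_a^L < 1/2; the other root is strictly greater than 1. -/
/-!
With `d = m_x - m_y > 0` and `m_yx* = c / 2`, the discriminant of `d β² - (d + c) β + c / 2`
is `d² + c²`, so its roots are `(d + c ∓ s) / (2d)` with `s = √(d² + c²)`.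
Since `max d c < s < d + c`, the smaller root lies in `(0, 1/2)` and the larger one exceeds `1`.
-/

open Real

namespace AttackQuadratic

noncomputable def lowerRoot (d c : ℝ) : ℝ := (d + c - √(d ^ 2 + c ^ 2)) / (2 * d)

noncomputable def upperRoot (d c : ℝ) : ℝ := (d + c + √(d ^ 2 + c ^ 2)) / (2 * d)

variable {d c : ℝ}

theorem eq_zero_iff (hd : d ≠ 0) (β : ℝ) :
    d * β ^ 2 - (d + c) * β + c / 2 = 0 ↔ β = lowerRoot d c ∨ β = upperRoot d c := by
  have hdiscrim : discrim d (-(d + c)) (c / 2) = √(d ^ 2 + c ^ 2) * √(d ^ 2 + c ^ 2) := by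
    rw [mul_self_sqrt (by positivity), discrim]
    ring
  have hquad := quadratic_eq_zero_iff hd hdiscrim β
  rw [neg_neg, or_comm] at hquad
  rw [lowerRoot, upperRoot, ← hquad]
  constructor <;> intro h <;> linear_combination h

theorem sqrt_sq_add_sq_lt_add (hd : 0 < d) (hc : 0 < c) : √(d ^ 2 + c ^ 2) < d + c :=
  (sqrt_lt' (by positivity)).2 (by nlinarith)

theorem lt_sqrt_sq_add_sq (hd : 0 ≤ d) (hc : c ≠ 0) : d < √(d ^ 2 + c ^ 2) :=
  (lt_sqrt hd).2 (lt_add_of_pos_right _ (by positivity))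

theorem lowerRoot_pos (hd : 0 < d) (hc : 0 < c) : 0 < lowerRoot d c :=
  div_pos (by linarith [sqrt_sq_add_sq_lt_add hd hc]) (by positivity)

theorem lowerRoot_lt_half (hd : 0 < d) (hc : 0 < c) : lowerRoot d c < 1 / 2 := by
  have hcs : c < √(d ^ 2 + c ^ 2) := by
    rw [add_comm]
    exact lt_sqrt_sq_add_sq hc.le hd.ne'
  rw [lowerRoot, div_lt_iff₀ (by positivity)]
  linarith

theorem one_lt_upperRoot (hd : 0 < d) (hc : 0 < c) : 1 < upperRoot d c := by
  rw [upperRoot, one_lt_div (by positivity)]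
  linarith [lt_sqrt_sq_add_sq hd.le hc.ne']

end AttackQuadratic

open AttackQuadratic in
/-- For m_x > m_y and symmetric attack capacities m_xy* = m_yx* = mc > 0
(so c = m_xy* + m_yx* = 2mc), the quadratic
(m_x−m_y)β² − (m_x−m_y+c)β + m_yx* = 0 has exactly one root in (0,1), namely
β_a^L = 1/2 + (c − √((m_x−m_y)² + c²))/(2(m_x−m_y)), which satisfies 0 < β_a^L < 1/2;
the other root is strictly greater than 1. -/
theorem stmt_12 (mx my mc : ℝ) (hd : my < mx) (hmc : 0 < mc)
    (c βa : ℝ) (hc : c = mc + mc)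
    (hβa : βa = 1 / 2 + (c - Real.sqrt ((mx - my) ^ 2 + c ^ 2)) / (2 * (mx - my))) :
    ((mx - my) * βa ^ 2 - (mx - my + c) * βa + mc = 0) ∧
    0 < βa ∧ βa < 1 / 2 ∧
    (∀ β : ℝ, 0 < β → β < 1 →
      (mx - my) * β ^ 2 - (mx - my + c) * β + mc = 0 → β = βa) ∧
    (∀ β : ℝ, (mx - my) * β ^ 2 - (mx - my + c) * β + mc = 0 → β ≠ βa → 1 < β) := by
  have hd0 : 0 < mx - my := sub_pos.2 hd
  have hc0 : 0 < c := by linarith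
  obtain rfl : mc = c / 2 := by linarith
  obtain rfl : βa = lowerRoot (mx - my) c := by
    rw [hβa, lowerRoot]
    field_simp
    ring
  have hroots := eq_zero_iff (c := c) hd0.ne'
  refine ⟨(hroots _).2 (.inl rfl), lowerRoot_pos hd0 hc0, lowerRoot_lt_half hd0 hc0, ?_, ?_⟩
  · intro β _ hβ1 hβ
    refine ((hroots β).1 hβ).resolve_right ?_
    rintro rfl
    exact hβ1.not_gt (one_lt_upperRoot hd0 hc0)
  · intro β hβ hne
    rw [((hroots β).1 hβ).resolve_left hne]
    exact one_lt_upperRoot hd0 hc0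
end

section
/- Let m_x > m_y and m_c* > 0, and define β(m_x, m_y) = 1/2 + (2m_c* − √((m_x − m_y)² + 4(m_c*)²)) / (2(m_x − m_y)). Then β(m_x, m_y) < 1/2 for all m_x > m_y, and β(m_x, m_y) → 1/2 as m_x − m_y → 0⁺. -/
open Filter

lemma sqrt_gt (mc d : ℝ) (hmc : 0 < mc) (hd : 0 < d) :
    2 * mc < Real.sqrt (d ^ 2 + 4 * mc ^ 2) := by
  have h : (2 * mc) ^ 2 < d ^ 2 + 4 * mc ^ 2 := by nlinarith
  nlinarith [Real.sq_sqrt (by positivity : (0:ℝ) ≤ d ^ 2 + 4 * mc ^ 2),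
    Real.sqrt_nonneg (d ^ 2 + 4 * mc ^ 2)]

lemma sqrt_le (mc d : ℝ) (hmc : 0 < mc) (hd : 0 < d) :
    4 * mc * Real.sqrt (d ^ 2 + 4 * mc ^ 2) ≤ 8 * mc ^ 2 + d ^ 2 := by
  nlinarith [sq_nonneg (Real.sqrt (d ^ 2 + 4 * mc ^ 2) - 2 * mc),
    Real.sq_sqrt (by positivity : (0:ℝ) ≤ d ^ 2 + 4 * mc ^ 2)]

/-- With equal attack capacities m_c* > 0 and
β(m_x,m_y) = 1/2 + (2m_c* − √((m_x−m_y)² + 4m_c*²))/(2(m_x−m_y)):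
β(m_x,m_y) < 1/2 whenever m_x > m_y, and β(m_x,m_y) → 1/2 as m_x − m_y → 0⁺. -/
theorem stmt_13 (mc : ℝ) (hmc : 0 < mc)
    (β : ℝ → ℝ → ℝ)
    (hβ : ∀ mx my : ℝ, β mx my =
      1 / 2 + (2 * mc - Real.sqrt ((mx - my) ^ 2 + 4 * mc ^ 2)) / (2 * (mx - my))) :
    (∀ mx my : ℝ, my < mx → β mx my < 1 / 2) ∧
    (∀ my : ℝ, Tendsto (fun d : ℝ => β (my + d) my)
      (nhdsWithin 0 (Set.Ioi 0)) (nhds (1 / 2))) := by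
  constructor
  · intro mx my h
    rw [hβ]
    have hd : 0 < mx - my := by linarith
    have hs := sqrt_gt mc (mx - my) hmc hd
    have : (2 * mc - Real.sqrt ((mx - my) ^ 2 + 4 * mc ^ 2)) / (2 * (mx - my)) < 0 :=
      div_neg_of_neg_of_pos (by linarith) (by linarith)
    linarith
  · intro my
    have hβ' : ∀ d : ℝ, β (my + d) my =
        1 / 2 + (2 * mc - Real.sqrt (d ^ 2 + 4 * mc ^ 2)) / (2 * d) := by
      intro d; rw [hβ]; ring_nf
    have key : Tendsto (fun d : ℝ =>
        (2 * mc - Real.sqrt (d ^ 2 + 4 * mc ^ 2)) / (2 * d))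
        (nhdsWithin 0 (Set.Ioi 0)) (nhds 0) := by
      have hlo : Tendsto (fun d : ℝ => -d / (8 * mc))
          (nhdsWithin 0 (Set.Ioi 0)) (nhds 0) := by
        have : Tendsto (fun d : ℝ => -d / (8 * mc)) (nhds 0) (nhds (-(0:ℝ) / (8 * mc))) :=
          (continuous_neg.div_const _).tendsto 0
        simpa using this.mono_left nhdsWithin_le_nhds
      refine tendsto_of_tendsto_of_tendsto_of_le_of_le' hlo tendsto_const_nhds ?_ ?_
      · filter_upwards [self_mem_nhdsWithin] with d hd
        have hd : 0 < d := hd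
        have hs := sqrt_le mc d hmc hd
        rw [div_le_div_iff₀ (by positivity) (by linarith)]
        nlinarith
      · filter_upwards [self_mem_nhdsWithin] with d hd
        have hd : 0 < d := hd
        have hs := sqrt_gt mc d hmc hd
        exact le_of_lt (div_neg_of_neg_of_pos (by linarith) (by linarith))
    have := key.const_add (1 / 2 : ℝ)
    simp only [add_zero] at this
    exact this.congr (fun d => (hβ' d).symm)
end

section
/- Let m > 1, κ_xy, κ_yx > 0, x̄, ȳ > 0 be finite, and let β^L = m_yx*/(m_xy* + m_yx*) with m_xy* = ȳκ_xy and m_yx* = x̄κ_yx. Suppose ψ ∈ [m−1−ε, m−1+ε] for small ε > 0, 0 < θ < ψ, θ/ψ > β^L, and t is such that η(t)·β^L·(m−1−ε) ≥ max{ȳκ_xy/κ_yx, x̄κ_yx/κ_xy} (with η(t) ≥ 1). If m_xy(y) ≥ κ_xy min{y, ȳ} and m_yx(x) ≤ x̄κ_yx, then (θ/ψ)·m_xy((ψ−θ)η(t)) − (1 − θ/ψ)·m_yx(θη(t)) > 0. -/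
/-- Drift-sign inequality for the ratio ODE of the symmetric BPA.
With m_xy* = ȳκ_xy, m_yx* = x̄κ_yx, β^L = m_yx*/(m_xy*+m_yx*), if
ψ ∈ [m−1−ε, m−1+ε] (0 < ε < m−1), 0 < θ < ψ, θ/ψ > β^L, η(t) ≥ 1 with
η(t)·β^L·(m−1−ε) ≥ max{ȳκ_xy/κ_yx, x̄κ_yx/κ_xy}, and the mean attack functions satisfy
m_xy(y) ≥ κ_xy·min{y, ȳ} and m_yx(x) ≤ x̄κ_yx, then
(θ/ψ)·m_xy((ψ−θ)η(t)) − (1−θ/ψ)·m_yx(θη(t)) > 0. -/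
theorem stmt_14 (m κxy κyx xbar ybar ε : ℝ)
    (hm : 1 < m) (hκxy : 0 < κxy) (hκyx : 0 < κyx)
    (hxbar : 0 < xbar) (hybar : 0 < ybar)
    (hε : 0 < ε) (hεm : ε < m - 1)
    (βL : ℝ) (hβL : βL = xbar * κyx / (ybar * κxy + xbar * κyx))
    (mxy myx : ℝ → ℝ)
    (hmxy : ∀ y : ℝ, 0 ≤ y → κxy * min y ybar ≤ mxy y)
    (hmyx : ∀ x : ℝ, 0 ≤ x → myx x ≤ xbar * κyx)
    (ψ θ ηt : ℝ)
    (hψ : ψ ∈ Set.Icc (m - 1 - ε) (m - 1 + ε))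
    (hθ : 0 < θ) (hθψ : θ < ψ) (hratio : βL < θ / ψ)
    (hηt : 1 ≤ ηt)
    (hT : max (ybar * κxy / κyx) (xbar * κyx / κxy) ≤ ηt * βL * (m - 1 - ε)) :
    0 < (θ / ψ) * mxy ((ψ - θ) * ηt) - (1 - θ / ψ) * myx (θ * ηt) := by
  obtain ⟨hψl, hψr⟩ := hψ
  have hψpos : 0 < ψ := lt_of_lt_of_le (by linarith) hψl
  set r := θ / ψ with hr
  have hr1 : r < 1 := (div_lt_one hψpos).mpr hθψ
  have hrpos : 0 < r := div_pos hθ hψpos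
  have hrψ : r * ψ = θ := div_mul_cancel₀ θ hψpos.ne'
  have ha : 0 ≤ (ψ - θ) * ηt := mul_nonneg (by linarith) (by linarith)
  have hb : 0 ≤ θ * ηt := mul_nonneg hθ.le (by linarith)
  have h1 := hmxy _ ha
  have h2 := hmyx _ hb
  have hden : 0 < ybar * κxy + xbar * κyx := by positivity
  have hβpos : 0 < βL := by rw [hβL]; positivity
  have key : (1 - r) * (xbar * κyx) < r * (κxy * min ((ψ - θ) * ηt) ybar) := by
    rcases min_cases ((ψ - θ) * ηt) ybar with ⟨hmin, hle⟩ | ⟨hmin, hle⟩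
    · rw [hmin]
      have h3 : xbar * κyx / κxy ≤ ηt * βL * (m - 1 - ε) :=
        le_trans (le_max_right _ _) hT
      have h4 : xbar * κyx ≤ ηt * βL * (m - 1 - ε) * κxy := by
        rw [div_le_iff₀ hκxy] at h3; linarith
      have h5 : xbar * κyx < κxy * ηt * r * ψ := by
        have h6 : ηt * βL * (m - 1 - ε) ≤ ηt * βL * ψ :=
          mul_le_mul_of_nonneg_left hψl (by positivity)
        have h7 : ηt * βL * ψ < ηt * r * ψ :=
          mul_lt_mul_of_pos_right (mul_lt_mul_of_pos_left hratio (by linarith)) hψpos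
        nlinarith
      have h8 : (1 - r) * (xbar * κyx) < (1 - r) * (κxy * ηt * r * ψ) :=
        mul_lt_mul_of_pos_left h5 (by linarith)
      have h9 : (1 - r) * (κxy * ηt * r * ψ) = r * (κxy * ((ψ - θ) * ηt)) := by
        rw [← hrψ]; ring
      linarith
    · rw [hmin]
      have hβeq : βL * (ybar * κxy + xbar * κyx) = xbar * κyx := by
        rw [hβL]; field_simp
      nlinarith [hratio, hden]
  nlinarith [mul_le_mul_of_nonneg_left h1 hrpos.le, mul_le_mul_of_nonneg_left h2 (by linarith : (0:ℝ) ≤ 1 - r)]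
end
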